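/- (Core Lyapunov estimate of Proposition 7: nonlinearly parameterized regression.) Let q ≤ p be positive integers, 𝒮 : ℝ^q → ℝ^p a map, P ∈ ℝ^{q×p} a matrix and ρ > 0 such that (a − b)ᵀ·P·(𝒮(a) − 𝒮(b)) ≥ ρ·|a − b|² for all a, b ∈ ℝ^q (strong P-monotonicity). Let θ ∈ ℝ^q, γ > 0, Δ : [0,∞) → ℝ continuous, and let θ̂ : [0,∞) → ℝ^q be differentiable with θ̂'(t) = −γ·Δ(t)²·P·(𝒮(θ̂(t)) − 𝒮(θ)) for all t ≥ 0. Then for all 0 ≤ t ≤ s: |θ̂(s) − θ|² ≤ exp( −2ργ·∫_t^s Δ(τ)² dτ )·|θ̂(t) − θ|². Consequently, if Δ is persistently exciting, i.e., there exist T > 0 and μ > 0 with ∫_t^{t+T} Δ(τ)² dτ ≥ μ for all t ≥ 0, then θ̂(t) converges to θ exponentially fast. -/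

import Mathlib

/-!
Along the flow, `V = |θ̂ - θ|²` satisfies `V' = -2γΔ² (θ̂ - θ)ᵀ P (𝒮 θ̂ - 𝒮 θ) ≤ -2ργΔ² V` by
strong `P`-monotonicity, so `V · exp (2ργ ∫ Δ²)` is antitone, which is the first estimate.
Persistent excitation makes `∫₀ᵗ Δ²` grow at least like `μ (t / T - 1)`, which turns the first
estimate into exponential decay of `|θ̂ - θ|`.
-/

open Matrix Real Set

theorem HasDerivAt.dotProduct {𝕜 ι : Type*} [NontriviallyNormedField 𝕜] [Fintype ι]
    {f g : 𝕜 → ι → 𝕜} {f' g' : ι → 𝕜} {x : 𝕜} (hf : HasDerivAt f f' x) (hg : HasDerivAt g g' x) :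
    HasDerivAt (fun y => f y ⬝ᵥ g y) (f' ⬝ᵥ g x + f x ⬝ᵥ g') x := by
  have hsum : HasDerivAt (fun y => ∑ i, f y i * g y i) (∑ i, (f' i * g x i + f x i * g' i)) x :=
    HasDerivAt.fun_sum fun i _ => (hasDerivAt_pi.mp hf i).mul (hasDerivAt_pi.mp hg i)
  rwa [Finset.sum_add_distrib] at hsum

theorem le_exp_neg_integral_mul_of_hasDerivAt_le {V V' h : ℝ → ℝ} (hh : Continuous h) {t s : ℝ}
    (hts : t ≤ s) (hV : ∀ u ∈ Icc t s, HasDerivAt V (V' u) u)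
    (hV' : ∀ u ∈ Icc t s, V' u ≤ -h u * V u) :
    V s ≤ exp (-∫ τ in t..s, h τ) * V t := by
  set F : ℝ → ℝ := fun u => ∫ τ in t..u, h τ
  have hF : ∀ u, HasDerivAt F (h u) u := fun u => (hh.integral_hasStrictDerivAt t u).hasDerivAt
  have hg : ∀ u ∈ Icc t s, HasDerivAt (fun u => V u * exp (F u))
      (V' u * exp (F u) + V u * (exp (F u) * h u)) u :=
    fun u hu => (hV u hu).mul (hF u).exp
  have hanti : AntitoneOn (fun u => V u * exp (F u)) (Icc t s) := by
    refine antitoneOn_of_hasDerivWithinAt_nonpos (convex_Icc t s)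
      (fun u hu => (hg u hu).continuousAt.continuousWithinAt)
      (fun u hu => (hg u (interior_subset hu)).hasDerivWithinAt) fun u hu => ?_
    have hu := interior_subset hu
    nlinarith [hV' u hu, exp_pos (F u)]
  have hs : V s * exp (F s) ≤ V t := by
    simpa [F] using hanti (left_mem_Icc.mpr hts) (right_mem_Icc.mpr hts) hts
  rw [exp_neg, ← div_eq_inv_mul, le_div_iff₀ (exp_pos _)]
  exact hs

theorem dotProduct_sub_self_le_exp_integral_of_hasDerivAt {ι κ : Type*} [Fintype ι] [Fintype κ]
    {S : (ι → ℝ) → κ → ℝ} {P : Matrix ι κ ℝ} {θ : ι → ℝ} {ρ γ : ℝ} (hγ : 0 ≤ γ)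
    (hmono : ∀ a, ρ * ((a - θ) ⬝ᵥ (a - θ)) ≤ (a - θ) ⬝ᵥ P *ᵥ (S a - S θ))
    {Δ : ℝ → ℝ} (hΔ : Continuous Δ) {θhat : ℝ → ι → ℝ} {t s : ℝ} (hts : t ≤ s)
    (hθhat : ∀ u ∈ Icc t s, HasDerivAt θhat ((-(γ * Δ u ^ 2)) • P *ᵥ (S (θhat u) - S θ)) u) :
    (θhat s - θ) ⬝ᵥ (θhat s - θ)
      ≤ exp (-(2 * ρ * γ) * ∫ τ in t..s, Δ τ ^ 2) * ((θhat t - θ) ⬝ᵥ (θhat t - θ)) := by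
  have key := le_exp_neg_integral_mul_of_hasDerivAt_le (h := fun u => 2 * ρ * γ * Δ u ^ 2)
    (by fun_prop) hts (fun u hu => ((hθhat u hu).sub_const θ).dotProduct ((hθhat u hu).sub_const θ))
    fun u _ => ?_
  · rwa [intervalIntegral.integral_const_mul, ← neg_mul] at key
  · simp only [dotProduct_comm _ (θhat u - θ), dotProduct_smul, smul_eq_mul]
    nlinarith [mul_le_mul_of_nonneg_left (hmono (θhat u)) (by positivity : 0 ≤ γ * Δ u ^ 2)]

section PersistentExcitation

variable {f : ℝ → ℝ} {T μ : ℝ}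

theorem nat_mul_le_integral_of_le_integral_add (hf : Continuous f) (hf₀ : ∀ x, 0 ≤ f x)
    (hT : 0 ≤ T) (hPE : ∀ t ≥ 0, μ ≤ ∫ τ in t..t + T, f τ) (n : ℕ) {t : ℝ} (ht : 0 ≤ t)
    (hnt : n * T ≤ t) : n * μ ≤ ∫ τ in 0..t, f τ := by
  induction n generalizing t with
  | zero => simpa using intervalIntegral.integral_nonneg ht fun x _ => hf₀ x
  | succ n ih =>
    have hnT : (n : ℝ) * T ≤ t - T := by push_cast at hnt; linarith
    have htT : 0 ≤ t - T := (by positivity : (0 : ℝ) ≤ n * T).trans hnT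
    have hsplit := intervalIntegral.integral_add_adjacent_intervals
      (hf.intervalIntegrable (μ := MeasureTheory.volume) 0 (t - T))
      (hf.intervalIntegrable (t - T) t)
    have hlast := hPE (t - T) htT
    rw [sub_add_cancel] at hlast
    push_cast
    linarith [ih htT hnT]

theorem mul_div_sub_one_le_integral_of_le_integral_add (hf : Continuous f)
    (hf₀ : ∀ x, 0 ≤ f x) (hμ : 0 ≤ μ) (hT : 0 < T) (hPE : ∀ t ≥ 0, μ ≤ ∫ τ in t..t + T, f τ)
    {t : ℝ} (ht : 0 ≤ t) : μ * (t / T - 1) ≤ ∫ τ in 0..t, f τ := by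
  set n := ⌊t / T⌋₊
  have hnt : n * T ≤ t := (le_div_iff₀ hT).mp (Nat.floor_le (div_nonneg ht hT.le))
  have hn : t / T - 1 ≤ n := by linarith [Nat.lt_floor_add_one (t / T)]
  calc μ * (t / T - 1) ≤ n * μ := by nlinarith
    _ ≤ ∫ τ in 0..t, f τ := nat_mul_le_integral_of_le_integral_add hf hf₀ hT.le hPE n ht hnt

end PersistentExcitation

theorem nlpre_lyapunov_estimate_general
    (q p : ℕ)
    (S : (Fin q → ℝ) → (Fin p → ℝ)) (P : Matrix (Fin q) (Fin p) ℝ)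
    (ρ : ℝ) (hρ : 0 < ρ)
    (hmono : ∀ a b : Fin q → ℝ,
      ρ * ((a - b) ⬝ᵥ (a - b)) ≤ (a - b) ⬝ᵥ P.mulVec (S a - S b))
    (θ : Fin q → ℝ) (γ : ℝ) (hγ : 0 < γ)
    (Δ : ℝ → ℝ) (hΔcont : Continuous Δ)
    (θhat : ℝ → Fin q → ℝ)
    (hθhat : ∀ t ≥ (0 : ℝ), HasDerivAt θhat
      ((-(γ * (Δ t) ^ 2)) • P.mulVec (S (θhat t) - S θ)) t) :
    (∀ t s : ℝ, 0 ≤ t → t ≤ s →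
      (θhat s - θ) ⬝ᵥ (θhat s - θ)
        ≤ Real.exp (-(2 * ρ * γ) * ∫ τ in t..s, (Δ τ) ^ 2)
            * ((θhat t - θ) ⬝ᵥ (θhat t - θ))) ∧
    ((∃ T > (0 : ℝ), ∃ μ > (0 : ℝ), ∀ t ≥ (0 : ℝ), μ ≤ ∫ τ in t..(t + T), (Δ τ) ^ 2) →
      ∃ M : ℝ, 0 ≤ M ∧ ∃ lam > (0 : ℝ), ∀ t ≥ (0 : ℝ),
        Real.sqrt ((θhat t - θ) ⬝ᵥ (θhat t - θ)) ≤ M * Real.exp (-lam * t)) := by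
  have estimate : ∀ t s : ℝ, 0 ≤ t → t ≤ s → (θhat s - θ) ⬝ᵥ (θhat s - θ)
      ≤ exp (-(2 * ρ * γ) * ∫ τ in t..s, Δ τ ^ 2) * ((θhat t - θ) ⬝ᵥ (θhat t - θ)) :=
    fun t s ht hts => dotProduct_sub_self_le_exp_integral_of_hasDerivAt hγ.le
      (fun a => hmono a θ) hΔcont hts fun u hu => hθhat u (ht.trans hu.1)
  refine ⟨estimate, ?_⟩
  rintro ⟨T, hT, μ, hμ, hPE⟩
  set V₀ := (θhat 0 - θ) ⬝ᵥ (θhat 0 - θ)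
  refine ⟨√V₀ * exp (ρ * γ * μ), by positivity, ρ * γ * μ / T, by positivity, fun t ht => ?_⟩
  have hgrowth := mul_div_sub_one_le_integral_of_le_integral_add (f := fun τ => Δ τ ^ 2)
    (by fun_prop)
    (fun x => sq_nonneg (Δ x)) hμ.le hT hPE ht
  calc √((θhat t - θ) ⬝ᵥ (θhat t - θ))
      ≤ √(exp (-(2 * ρ * γ) * ∫ τ in 0..t, Δ τ ^ 2) * V₀) := sqrt_le_sqrt (estimate 0 t le_rfl ht)
    _ = exp (-(ρ * γ * ∫ τ in 0..t, Δ τ ^ 2)) * √V₀ := by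
      rw [sqrt_mul (exp_nonneg _), ← exp_half]; ring_nf
    _ ≤ exp (-(ρ * γ * (μ * (t / T - 1)))) * √V₀ := by gcongr
    _ = √V₀ * exp (ρ * γ * μ) * exp (-(ρ * γ * μ / T) * t) := by
      rw [mul_comm _ √V₀, mul_assoc √V₀, ← exp_add]
      congr 2
      field_simp
      ring

/-- Core Lyapunov estimate of Proposition 7 (nonlinearly parameterized
regression): under strong `P`-monotonicity of `𝒮` the squared estimation error
contracts at rate `exp(−2ργ ∫ Δ²)`, and persistent excitation of `Δ` yields
exponential convergence. -/
theorem nlpre_lyapunov_estimate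
    (q p : ℕ) (hq : 0 < q) (hqp : q ≤ p)
    (S : (Fin q → ℝ) → (Fin p → ℝ)) (P : Matrix (Fin q) (Fin p) ℝ)
    (ρ : ℝ) (hρ : 0 < ρ)
    (hmono : ∀ a b : Fin q → ℝ,
      ρ * ((a - b) ⬝ᵥ (a - b)) ≤ (a - b) ⬝ᵥ P.mulVec (S a - S b))
    (θ : Fin q → ℝ) (γ : ℝ) (hγ : 0 < γ)
    (Δ : ℝ → ℝ) (hΔcont : Continuous Δ)
    (θhat : ℝ → Fin q → ℝ)
    (hθhat : ∀ t ≥ (0 : ℝ), HasDerivAt θhat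
      ((-(γ * (Δ t) ^ 2)) • P.mulVec (S (θhat t) - S θ)) t) :
    (∀ t s : ℝ, 0 ≤ t → t ≤ s →
      (θhat s - θ) ⬝ᵥ (θhat s - θ)
        ≤ Real.exp (-(2 * ρ * γ) * ∫ τ in t..s, (Δ τ) ^ 2)
            * ((θhat t - θ) ⬝ᵥ (θhat t - θ))) ∧
    ((∃ T > (0 : ℝ), ∃ μ > (0 : ℝ), ∀ t ≥ (0 : ℝ), μ ≤ ∫ τ in t..(t + T), (Δ τ) ^ 2) →
      ∃ M : ℝ, 0 ≤ M ∧ ∃ lam > (0 : ℝ), ∀ t ≥ (0 : ℝ),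
        Real.sqrt ((θhat t - θ) ⬝ᵥ (θhat t - θ)) ≤ M * Real.exp (-lam * t)) :=
  nlpre_lyapunov_estimate_general q p S P ρ hρ hmono θ γ hγ Δ hΔcont θhat hθhat
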